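/- Let n ≥ 2 and let B ∈ 𝒰^n be cubelike. Suppose that for some i₀ ∈ {1,…,n} the orthogonal projection of B onto the coordinate hyperplane e_{i₀}^⊥ is an (n−1)-dimensional parallelepiped (an affine image, within e_{i₀}^⊥, of an (n−1)-dimensional cube). Then 𝟙 − e_{i₀} ∈ B; equivalently, the projection of B onto e_{i₀}^⊥ equals the projection of [−1,1]^n onto e_{i₀}^⊥. -/

import Mathlib

/-!
The projection `P` of `B` onto `e_{i₀}^⊥` is again 1-unconditional, and since `B` is cubelike,
every extreme point `w` of `P` (it lifts to an extreme point of `B`) has all coordinates off `i₀`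
nonzero. The sign changes of `w` thus give `2^(n-1)` distinct extreme points of `P`; as `P` is
the convex hull of the at most `2^(n-1)` images of the vertices of the cube, these are all of
them, and `P` is the box `{y | ∀ j, |y j| ≤ |w j|}`. It contains `e_j` for `j ≠ i₀`, so
`|w j| ≥ 1` and `𝟙 - e_{i₀} ∈ P`. Finally, a 1-unconditional convex set contains every point
whose coordinates are dominated in absolute value by those of one of its points, so
`𝟙 - e_{i₀} ∈ B`.
-/

open Set

/-- A convex body in `ℝ^n`: a compact convex set with nonempty interior. -/
def IsConvexBody {n : ℕ} (K : Set (Fin n → ℝ)) : Prop :=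
  Convex ℝ K ∧ IsCompact K ∧ (interior K).Nonempty

/-- `K` is 1-unconditional: closed under sign changes of the coordinates. -/
def Unconditional {n : ℕ} (K : Set (Fin n → ℝ)) : Prop :=
  ∀ x ∈ K, ∀ ε : Fin n → ℝ, (∀ i, ε i = 1 ∨ ε i = -1) → (fun i => ε i * x i) ∈ K

/-- The direction `d` illuminates the (boundary) point `x` of `K`. -/
def Illuminates {n : ℕ} (K : Set (Fin n → ℝ)) (d x : Fin n → ℝ) : Prop :=
  ∃ ε : ℝ, 0 < ε ∧ x + ε • d ∈ interior K

/-- The set of directions `D` illuminates every boundary point of `K`. -/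
def IlluminatesSet {n : ℕ} (K : Set (Fin n → ℝ)) (D : Set (Fin n → ℝ)) : Prop :=
  ∀ x ∈ frontier K, ∃ d ∈ D, Illuminates K d x

/-- The illumination number: smallest cardinality of a set of nonzero directions
illuminating `K`. -/
noncomputable def illumNumber {n : ℕ} (K : Set (Fin n → ℝ)) : ℕ :=
  sInf {m | ∃ D : Finset (Fin n → ℝ), D.card = m ∧ (∀ d ∈ D, d ≠ 0) ∧
    IlluminatesSet K ↑D}

/-- A parallelepiped: an affine image of the cube `[-1,1]^n`. -/
def IsParallelepiped {n : ℕ} (K : Set (Fin n → ℝ)) : Prop :=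
  ∃ T : (Fin n → ℝ) ≃ᵃ[ℝ] (Fin n → ℝ),
    K = T '' (Set.Icc (fun _ => (-1 : ℝ)) (fun _ => 1))

/-- The standard basis vector `e i`. -/
def stdB {n : ℕ} (i : Fin n) : Fin n → ℝ := Pi.single i 1

/-- The class `𝒰^n`: 1-unconditional convex bodies all of whose standard basis
vectors lie on the boundary. -/
def memU {n : ℕ} (K : Set (Fin n → ℝ)) : Prop :=
  IsConvexBody K ∧ Unconditional K ∧ ∀ i : Fin n, stdB i ∈ frontier K

/-- A 1-unconditional body is cubelike if all its extreme points have all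
coordinates nonzero. -/
def Cubelike {n : ℕ} (K : Set (Fin n → ℝ)) : Prop :=
  ∀ x ∈ Set.extremePoints ℝ K, ∀ i, x i ≠ 0

/-- The all-ones vector `𝟙`. -/
def allOnes {n : ℕ} : Fin n → ℝ := fun _ => 1

section SignOrbit

variable {ι : Type*} [Fintype ι]

def signOrbit (x : ι → ℝ) : Set (ι → ℝ) := univ.pi fun i => {x i, -x i}

lemma signOrbit_finite (x : ι → ℝ) : (signOrbit x).Finite :=
  Set.Finite.pi fun _ => by simp

lemma encard_pair_neg (a : ℝ) : ({a, -a} : Set ℝ).encard = if a = 0 then 1 else 2 := by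
  split_ifs with ha
  · simp [ha]
  · exact encard_pair fun h => ha (by linarith)

lemma encard_signOrbit_eq {x y : ι → ℝ} (h : ∀ i, x i = 0 ↔ y i = 0) :
    (signOrbit x).encard = (signOrbit y).encard := by
  simp only [signOrbit, encard_pi_eq_prod_encard, encard_pair_neg, h]

lemma mem_uIcc_self_neg {a b : ℝ} : a ∈ uIcc b (-b) ↔ |a| ≤ |b| := by
  rw [Set.mem_uIcc, abs_le]
  rcases le_total 0 b with hb | hb
  · rw [abs_of_nonneg hb]; constructor
    · rintro (⟨h1, h2⟩ | ⟨h1, h2⟩) <;> constructor <;> linarith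
    · exact Or.inr
  · rw [abs_of_nonpos hb, neg_neg]; constructor
    · rintro (⟨h1, h2⟩ | ⟨h1, h2⟩) <;> constructor <;> linarith
    · exact Or.inl

lemma convexHull_signOrbit (x : ι → ℝ) :
    convexHull ℝ (signOrbit x) = {y | ∀ i, |y i| ≤ |x i|} := by
  ext y
  simp only [signOrbit, convexHull_pi, convexHull_pair, segment_eq_uIcc, Set.mem_univ_pi,
    mem_uIcc_self_neg, Set.mem_ofPred_eq]

end SignOrbit

namespace Unconditional

variable {n : ℕ} {K : Set (Fin n → ℝ)}

lemma signOrbit_subset (hK : Unconditional K) {x : Fin n → ℝ} (hx : x ∈ K) :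
    signOrbit x ⊆ K := by
  intro y hy
  simp only [signOrbit, Set.mem_univ_pi, Set.mem_insert_iff, Set.mem_singleton_iff] at hy
  convert hK x hx (fun i => if y i = x i then 1 else -1) (fun i => by split_ifs <;> simp)
    using 1
  funext i
  split_ifs with h
  · simp [h]
  · simp [(hy i).resolve_left h]

lemma neg_mem (hK : Unconditional K) {x : Fin n → ℝ} (hx : x ∈ K) : -x ∈ K :=
  hK.signOrbit_subset hx (by simp [signOrbit])

lemma mem_of_abs_le (hK : Unconditional K) (hconv : Convex ℝ K) {x y : Fin n → ℝ} (hx : x ∈ K)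
    (hy : ∀ i, |y i| ≤ |x i|) : y ∈ K :=
  convexHull_min (hK.signOrbit_subset hx) hconv (by rwa [convexHull_signOrbit])

lemma update_zero_mem (hK : Unconditional K) (hconv : Convex ℝ K) {x : Fin n → ℝ} (hx : x ∈ K)
    (i : Fin n) : Function.update x i 0 ∈ K :=
  hK.mem_of_abs_le hconv hx fun j => by
    rcases eq_or_ne j i with rfl | hj <;> simp [*]

lemma image_update_zero (hK : Unconditional K) (i : Fin n) :
    Unconditional ((fun x => Function.update x i 0) '' K) := by
  rintro _ ⟨x, hx, rfl⟩ ε hε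
  refine ⟨fun j => ε j * x j, hK x hx ε hε, funext fun j => ?_⟩
  rcases eq_or_ne j i with rfl | hj <;> simp [*]

lemma zero_mem_interior (hK : Unconditional K) (hconv : Convex ℝ K)
    (hint : (interior K).Nonempty) : (0 : Fin n → ℝ) ∈ interior K := by
  obtain ⟨z, hz⟩ := hint
  have hneg : -interior K ⊆ interior K :=
    interior_maximal (fun x hx => by simpa using hK.neg_mem (interior_subset hx))
      isOpen_interior.neg
  simpa using hconv.interior hz (hneg (Set.neg_mem_neg.2 hz))
    (by norm_num : (0 : ℝ) ≤ 1 / 2) (by norm_num : (0 : ℝ) ≤ 1 / 2) (by norm_num)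

lemma extremePoints (hK : Unconditional K) : Unconditional (Set.extremePoints ℝ K) := by
  intro y hy ε hε
  have hε0 : ∀ i, ε i ≠ 0 := fun i => by rcases hε i with h | h <;> simp [h]
  let L : (Fin n → ℝ) ≃ₗ[ℝ] (Fin n → ℝ) :=
    LinearEquiv.piCongrRight fun i => LinearEquiv.smulOfNeZero ℝ ℝ (ε i) (hε0 i)
  have hLK : L '' K = K := by
    refine (Set.image_subset_iff.2 fun x hx => hK x hx ε hε).antisymm fun x hx => ?_
    refine ⟨fun i => ε i * x i, hK x hx ε hε, funext fun i => ?_⟩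
    rcases hε i with h | h <;> simp [h]
  rw [← hLK, ← image_extremePoints]
  exact ⟨y, hy, rfl⟩

/-- The sign orbit of `w` lies in `S`, and by the cardinality bound it is all of `S`. -/
lemma convexHull_eq_setOf_abs_le {S : Set (Fin n → ℝ)} (hS : Unconditional (convexHull ℝ S))
    {w : Fin n → ℝ} (hw : w ∈ Set.extremePoints ℝ (convexHull ℝ S))
    (hcard : S.encard ≤ (signOrbit w).encard) :
    convexHull ℝ S = {y | ∀ i, |y i| ≤ |w i|} := by
  have hsub : signOrbit w ⊆ S :=
    (hS.extremePoints.signOrbit_subset hw).trans extremePoints_convexHull_subset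
  rw [← (signOrbit_finite w).eq_of_subset_of_encard_le hsub hcard, convexHull_signOrbit]

end Unconditional

def hyperplaneProj {n : ℕ} (i : Fin n) : (Fin n → ℝ) →L[ℝ] (Fin n → ℝ) :=
  ContinuousLinearMap.pi fun j => if j = i then 0 else ContinuousLinearMap.proj j

lemma hyperplaneProj_apply {n : ℕ} (i : Fin n) (x : Fin n → ℝ) :
    hyperplaneProj i x = Function.update x i 0 := by
  funext j
  by_cases hj : j = i <;> simp [hyperplaneProj, hj]

lemma allOnes_sub_stdB_apply {n : ℕ} (i j : Fin n) :
    (allOnes - stdB i : Fin n → ℝ) j = if j = i then 0 else 1 := by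
  rcases eq_or_ne j i with rfl | hj <;> simp [allOnes, stdB, *]

lemma setOf_abs_le_one_eq_convexHull_signOrbit {n : ℕ} (i : Fin n) :
    {x : Fin n → ℝ | x i = 0 ∧ ∀ j, |x j| ≤ 1} = convexHull ℝ (signOrbit (allOnes - stdB i)) := by
  rw [convexHull_signOrbit]
  ext x
  simp only [Set.mem_ofPred_eq, allOnes_sub_stdB_apply]
  constructor
  · rintro ⟨h0, h⟩ j
    split_ifs with hj <;> simp [hj, h0, h]
  · intro h
    refine ⟨by simpa using h i, fun j => (h j).trans ?_⟩
    split_ifs <;> norm_num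

namespace Cubelike

variable {n : ℕ} {K : Set (Fin n → ℝ)}

lemma extremePoints_image_update_zero_ne_zero (hc : Cubelike K) (hK : IsCompact K)
    {i j : Fin n} (hj : j ≠ i) {y : Fin n → ℝ}
    (hy : y ∈ extremePoints ℝ ((fun x => Function.update x i 0) '' K)) : y j ≠ 0 := by
  have hpr : (fun x => Function.update x i 0) = (hyperplaneProj i).toContinuousAffineMap :=
    funext fun x => (hyperplaneProj_apply i x).symm
  rw [hpr] at hy
  obtain ⟨x, hx, rfl⟩ := surjOn_extremePoints_image _ hK hy
  simpa [hyperplaneProj_apply, hj] using hc x hx j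

lemma exists_image_update_zero_eq_setOf_abs_le (hc : Cubelike K) (hunc : Unconditional K)
    (hK : IsCompact K) (hne : K.Nonempty) {i : Fin n} {T : (Fin n → ℝ) →ᵃ[ℝ] (Fin n → ℝ)}
    (hT : (fun x => Function.update x i 0) '' K = T '' {x | x i = 0 ∧ ∀ j, |x j| ≤ 1}) :
    ∃ w : Fin n → ℝ, (fun x => Function.update x i 0) '' K = {y | ∀ j, |y j| ≤ |w j|} := by
  set pr := fun x : Fin n → ℝ => Function.update x i 0
  have hprc : Continuous pr := continuous_id.update i continuous_const
  obtain ⟨w, hw⟩ := (hK.image hprc).extremePoints_nonempty (hne.image pr)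
  have hw0 : ∀ j, w j = 0 ↔ j = i := fun j => by
    refine ⟨fun h => by_contra fun hj => hc.extremePoints_image_update_zero_ne_zero hK hj hw h, ?_⟩
    rintro rfl
    obtain ⟨x, -, rfl⟩ := hw.1
    simp [pr]
  rw [setOf_abs_le_one_eq_convexHull_signOrbit, AffineMap.image_convexHull] at hT
  rw [hT] at hw ⊢
  refine ⟨w, (hT ▸ hunc.image_update_zero i).convexHull_eq_setOf_abs_le hw ?_⟩
  calc (T '' signOrbit (allOnes - stdB i)).encard ≤ (signOrbit (allOnes - stdB i)).encard :=
        Set.encard_image_le _ _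
    _ = (signOrbit w).encard := encard_signOrbit_eq fun j => by
        simp only [allOnes_sub_stdB_apply, hw0]
        split_ifs with h <;> simp [h]

end Cubelike

namespace memU

variable {n : ℕ} {K : Set (Fin n → ℝ)}

lemma abs_le_one (hK : memU K) {x : Fin n → ℝ} (hx : x ∈ K) (j : Fin n) : |x j| ≤ 1 := by
  obtain ⟨⟨hconv, hcomp, hint⟩, hunc, hfr⟩ := hK
  by_contra! hlt
  have hc : |x j| • stdB j ∈ K := hunc.mem_of_abs_le hconv hx fun i => by
    rcases eq_or_ne i j with rfl | hi <;> simp [stdB, *]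
  have hpos : 0 < |x j| := one_pos.trans hlt
  have hint : stdB j ∈ interior K := by
    convert hconv.combo_interior_self_mem_interior (hunc.zero_mem_interior hconv hint) hc
      (sub_pos.2 ((div_lt_one hpos).2 hlt)) (by positivity) (sub_add_cancel 1 (1 / |x j|)) using 1
    rw [smul_zero, zero_add, smul_smul, one_div_mul_cancel hpos.ne', one_smul]
  exact (hcomp.isClosed.frontier_eq ▸ hfr j).2 hint

lemma stdB_mem_image_update_zero (hK : memU K) {i j : Fin n} (hj : j ≠ i) :
    stdB j ∈ (fun x => Function.update x i 0) '' K :=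
  ⟨stdB j, hK.1.2.1.isClosed.frontier_subset (hK.2.2 j), by simp [stdB, hj.symm]⟩

lemma image_update_zero_eq (hK : memU K) {i : Fin n} (hv : allOnes - stdB i ∈ K) :
    (fun x => Function.update x i 0) '' K
      = (fun x => Function.update x i 0) '' Set.Icc (fun _ => (-1 : ℝ)) (fun _ => 1) := by
  refine (Set.image_mono fun x hx => Set.mem_Icc.2
    ⟨fun j => (abs_le.1 (hK.abs_le_one hx j)).1, fun j => (abs_le.1 (hK.abs_le_one hx j)).2⟩)
    |>.antisymm ?_
  rintro _ ⟨y, hy, rfl⟩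
  refine ⟨Function.update y i 0, hK.2.1.mem_of_abs_le hK.1.1 hv fun j => ?_,
    Function.update_idem _ _ _⟩
  rcases eq_or_ne j i with rfl | hj
  · simp
  · rw [allOnes_sub_stdB_apply, if_neg hj, abs_one, Function.update_of_ne hj]
    exact abs_le.2 ⟨hy.1 j, hy.2 j⟩

end memU

theorem stmt17_general (n : ℕ) (B : Set (Fin n → ℝ)) (hB : memU B)
    (hcube : Cubelike B) (i₀ : Fin n)
    (hproj : ∃ T : (Fin n → ℝ) →ᵃ[ℝ] (Fin n → ℝ), Function.Injective T ∧
      (fun x => Function.update x i₀ 0) '' B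
        = T '' {x : Fin n → ℝ | x i₀ = 0 ∧ ∀ j, |x j| ≤ 1}) :
    allOnes - stdB i₀ ∈ B ∧
      (fun x => Function.update x i₀ 0) '' B
        = (fun x => Function.update x i₀ 0) ''
            (Set.Icc (fun _ => (-1 : ℝ)) (fun _ => 1)) := by
  obtain ⟨⟨hconv, hcomp, hint⟩, hunc, -⟩ := id hB
  obtain ⟨T, -, hT⟩ := hproj
  obtain ⟨w, hbox⟩ :=
    hcube.exists_image_update_zero_eq_setOf_abs_le hunc hcomp (hint.mono interior_subset) hT
  have hvP : allOnes - stdB i₀ ∈ (fun x => Function.update x i₀ 0) '' B := by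
    rw [hbox]
    intro j
    rcases eq_or_ne j i₀ with rfl | hj
    · simp [allOnes, stdB]
    · have hwj := hbox ▸ hB.stdB_mem_image_update_zero hj
      simpa [allOnes, stdB, hj] using hwj j
  obtain ⟨x, hx, hxv⟩ := hvP
  have hvB : allOnes - stdB i₀ ∈ B := hxv ▸ hunc.update_zero_mem hconv hx i₀
  exact ⟨hvB, hB.image_update_zero_eq hvB⟩

/-- If `B ∈ 𝒰^n`, `n ≥ 2`, is cubelike and its projection onto the
coordinate hyperplane `e_{i₀}^⊥` is an `(n-1)`-dimensional parallelepiped (an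
injective affine image of the `(n-1)`-dimensional cube in that hyperplane), then
`𝟙 - e_{i₀} ∈ B`; equivalently, the projection of `B` onto `e_{i₀}^⊥` equals the
projection of `[-1,1]^n` onto `e_{i₀}^⊥`. -/
theorem stmt17 (n : ℕ) (hn : 2 ≤ n) (B : Set (Fin n → ℝ)) (hB : memU B)
    (hcube : Cubelike B) (i₀ : Fin n)
    (hproj : ∃ T : (Fin n → ℝ) →ᵃ[ℝ] (Fin n → ℝ), Function.Injective T ∧
      (fun x => Function.update x i₀ 0) '' B
        = T '' {x : Fin n → ℝ | x i₀ = 0 ∧ ∀ j, |x j| ≤ 1}) :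
    allOnes - stdB i₀ ∈ B ∧
      (fun x => Function.update x i₀ 0) '' B
        = (fun x => Function.update x i₀ 0) ''
            (Set.Icc (fun _ => (-1 : ℝ)) (fun _ => 1)) :=
  stmt17_general n B hB hcube i₀ hproj
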